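/- arXiv:1004.3621 — 3 statements merged into one kernel-verified Lean document; each statement's English description precedes it below -/
import Mathlib

section
/- With C_k = B_{2k}/(2k)! (B_{2k} the Bernoulli numbers), for every k ≥ 1: C_k + C_{k-1}/(3!·4) + C_{k-2}/(5!·4²) + ⋯ + C₁/((2k−1)!·4^{k−1}) = 2k/((2k+1)!·4^k). -/
/-!
Since `Bₙ(1 - x) = (-1)ⁿ Bₙ(x)`, the Bernoulli polynomial of odd degree `2k + 1` vanishes at `1/2`.
Expanding `2^(2k+1) B_{2k+1}(1/2) = ∑ᵢ C(2k+1, i) Bᵢ 2ⁱ` and using that the only nonzero odd Bernoulli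
number is `B₁ = -1/2` gives `∑_{i ≤ k} C(2k+1, 2i) B_{2i} 4ⁱ = 2k + 1`; dividing by `(2k+1)! 4ᵏ` and
removing the term `i = 0` is the recurrence.
-/

open Finset

theorem Finset.sum_range_two_mul {M : Type*} [AddCommMonoid M] (f : ℕ → M) (m : ℕ) :
    ∑ j ∈ range (2 * m), f j = ∑ i ∈ range m, (f (2 * i) + f (2 * i + 1)) := by
  induction m with
  | zero => simp
  | succ m ih =>
    rw [Nat.mul_succ, sum_range_succ, sum_range_succ, ih, sum_range_succ, add_assoc]

theorem Polynomial.bernoulli_eval_half_eq_zero_of_odd {n : ℕ} (hn : Odd n) :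
    (Polynomial.bernoulli n).eval (1 / 2) = 0 := by
  have h := Polynomial.bernoulli_eval_one_sub n (1 / 2)
  rw [hn.neg_one_pow, show (1 : ℚ) - 1 / 2 = 1 / 2 by norm_num] at h
  linarith

theorem Polynomial.two_pow_mul_bernoulli_eval_half (n : ℕ) :
    (2 : ℚ) ^ n * (Polynomial.bernoulli n).eval (1 / 2) =
      ∑ i ∈ range (n + 1), _root_.bernoulli i * n.choose i * 2 ^ i := by
  rw [Polynomial.bernoulli, Polynomial.eval_finsetSum, mul_sum]
  refine sum_congr rfl fun i hi => ?_
  have hi : i ≤ n := Nat.lt_succ_iff.mp (mem_range.mp hi)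
  rw [Polynomial.eval_monomial, ← Nat.sub_add_cancel hi, pow_add, Nat.add_sub_cancel,
    div_pow, one_pow]
  field_simp

theorem sum_bernoulli_even_mul_choose_mul_four_pow (k : ℕ) :
    ∑ i ∈ range (k + 1), bernoulli (2 * i) * (2 * k + 1).choose (2 * i) * (4 : ℚ) ^ i =
      2 * k + 1 := by
  have hzero := Polynomial.two_pow_mul_bernoulli_eval_half (2 * k + 1)
  rw [Polynomial.bernoulli_eval_half_eq_zero_of_odd (odd_two_mul_add_one k), mul_zero,
    show 2 * k + 1 + 1 = 2 * (k + 1) by ring, sum_range_two_mul, sum_add_distrib] at hzero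
  have hodd : ∑ i ∈ range (k + 1),
      bernoulli (2 * i + 1) * (2 * k + 1).choose (2 * i + 1) * (2 : ℚ) ^ (2 * i + 1) =
        -(2 * k + 1) := by
    rw [sum_range_succ', sum_eq_zero fun i _ => by
      rw [bernoulli_eq_zero_of_odd (odd_two_mul_add_one (i + 1)) (by omega), zero_mul, zero_mul]]
    simp only [mul_zero, zero_add, bernoulli_one, Nat.choose_one_right, pow_one]
    push_cast
    ring
  have hfour (i : ℕ) : (2 : ℚ) ^ (2 * i) = 4 ^ i := by rw [pow_mul]; norm_num
  simp only [hfour] at hzero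
  linarith

theorem sum_Icc_bernoulli_even_mul_choose_mul_four_pow (k : ℕ) :
    ∑ i ∈ Icc 1 k, bernoulli (2 * i) * (2 * k + 1).choose (2 * i) * (4 : ℚ) ^ i = 2 * k := by
  have h := sum_bernoulli_even_mul_choose_mul_four_pow k
  rw [range_eq_Ico, sum_eq_sum_Ico_succ_bot (by omega : 0 < k + 1), zero_add,
    Ico_add_one_right_eq_Icc] at h
  simp only [mul_zero, bernoulli_zero, Nat.choose_zero_right, Nat.cast_one, pow_zero,
    mul_one] at h
  linarith

theorem div_factorial_div_factorial_mul_four_pow {K : Type*} [Field K] [CharZero K] {i k : ℕ}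
    (hik : i ≤ k) (x : K) :
    x / (2 * i).factorial / ((2 * (k - i) + 1).factorial * 4 ^ (k - i)) =
      x * (2 * k + 1).choose (2 * i) * 4 ^ i / ((2 * k + 1).factorial * 4 ^ k) := by
  rw [Nat.cast_choose K (by omega : 2 * i ≤ 2 * k + 1),
    show 2 * k + 1 - 2 * i = 2 * (k - i) + 1 by omega, ← pow_mul_pow_sub 4 hik]
  have := Nat.cast_ne_zero (R := K) |>.mpr (2 * k + 1).factorial_ne_zero
  field_simp

theorem bernoulli_stable_recurrence_general (k : ℕ) :
    ∑ i ∈ Finset.Icc 1 k,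
        ((bernoulli (2 * i) : ℝ) / (Nat.factorial (2 * i))) /
          ((Nat.factorial (2 * (k - i) + 1)) * 4 ^ (k - i)) =
      2 * (k : ℝ) / ((Nat.factorial (2 * k + 1)) * 4 ^ k) := by
  rw [sum_congr rfl fun i hi => div_factorial_div_factorial_mul_four_pow (mem_Icc.mp hi).2 _,
    ← sum_div]
  congr 1
  exact_mod_cast sum_Icc_bernoulli_even_mul_choose_mul_four_pow k

theorem bernoulli_stable_recurrence (k : ℕ) (hk : 1 ≤ k) :
    ∑ i ∈ Finset.Icc 1 k,
        ((bernoulli (2 * i) : ℝ) / (Nat.factorial (2 * i))) /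
          ((Nat.factorial (2 * (k - i) + 1)) * 4 ^ (k - i)) =
      2 * (k : ℝ) / ((Nat.factorial (2 * k + 1)) * 4 ^ k) :=
  bernoulli_stable_recurrence_general k
end

section
/- For all real x, Σ_{j=1}^∞ x^j(−1)^{j−1}/(j!·j) = e^{−x}·Σ_{j=1}^∞ H_j x^j/j!, where H_j = Σ_{m=1}^j 1/m is the j-th harmonic number; equivalently ∫_0^x (1−e^{−u})/u du = e^{−x} Σ_{j=1}^∞ H_j x^j/j!. -/
/-!
Both sides vanish at `0` and have derivative `(1 - e^{-x})/x = expSlope (-x)`, where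
`expSlope x = ∑ x^j/(j+1)! = (e^x - 1)/x`. On the right this is because `H_{j+1} = H_j + 1/(j+1)`
makes the exponential generating function `G` of the harmonic numbers satisfy `G' = G + expSlope`,
so `(e^{-x} G)' = e^{-x} expSlope x = expSlope (-x)`. The integral form is then the fundamental
theorem of calculus.
-/

open scoped Nat
open Real

section FactoriallyBoundedCoefficients

variable {b : ℕ → ℝ} {C : ℝ}

lemma summable_add_one_mul_pow_div_factorial (R : ℝ) :
    Summable fun j : ℕ => ((j : ℝ) + 1) * R ^ j / j ! := by
  refine .of_norm_bounded ((summable_pow_div_factorial (2 * |R|)).mul_left 2) fun j => ?_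
  have hj : (j : ℝ) + 1 ≤ 2 ^ j := by exact_mod_cast Nat.lt_two_pow_self
  rw [norm_div, norm_mul, norm_pow, Real.norm_natCast, Real.norm_eq_abs, Real.norm_eq_abs,
    abs_of_nonneg (by positivity : (0 : ℝ) ≤ j + 1), mul_pow, ← mul_div_assoc, ← mul_assoc]
  gcongr
  linarith [pow_pos (two_pos : (0 : ℝ) < 2) j]

lemma summable_mul_pow_succ (hb : ∀ j, |b j| ≤ C / j !) (x : ℝ) :
    Summable fun j : ℕ => b j * x ^ (j + 1) := by
  refine .of_norm_bounded ((summable_pow_div_factorial |x|).mul_left (C * |x|)) fun j => ?_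
  rw [norm_mul, norm_pow, Real.norm_eq_abs, Real.norm_eq_abs, pow_succ]
  calc |b j| * (|x| ^ j * |x|) ≤ C / j ! * (|x| ^ j * |x|) := by gcongr; exact hb j
    _ = C * |x| * (|x| ^ j / j !) := by ring

lemma hasDerivAt_tsum_mul_pow_succ (hb : ∀ j, |b j| ≤ C / j !) (x : ℝ) :
    HasDerivAt (fun y => ∑' j : ℕ, b j * y ^ (j + 1))
      (∑' j : ℕ, ((j : ℝ) + 1) * b j * x ^ j) x := by
  set R := |x| + 1
  have hx : x ∈ Metric.ball (0 : ℝ) R := by simp [R]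
  have hderiv (j : ℕ) (y : ℝ) :
      HasDerivAt (fun y => b j * y ^ (j + 1)) (((j : ℝ) + 1) * b j * y ^ j) y := by
    refine ((hasDerivAt_pow (j + 1) y).const_mul (b j)).congr_deriv ?_
    push_cast [Nat.add_sub_cancel]
    ring
  have hbound (j : ℕ) (y : ℝ) (hy : y ∈ Metric.ball (0 : ℝ) R) :
      ‖((j : ℝ) + 1) * b j * y ^ j‖ ≤ C * (((j : ℝ) + 1) * R ^ j / j !) := by
    have hyR : |y| ≤ R := by simpa using (Metric.mem_ball.mp hy).le
    rw [norm_mul, norm_mul, norm_pow, Real.norm_eq_abs, Real.norm_eq_abs, Real.norm_eq_abs,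
      abs_of_nonneg (by positivity : (0 : ℝ) ≤ j + 1)]
    calc (j + 1) * |b j| * |y| ^ j ≤ (j + 1) * (C / j !) * R ^ j := by
          gcongr
          · exact mul_nonneg (by positivity) ((abs_nonneg _).trans (hb j))
          · exact hb j
      _ = C * ((j + 1) * R ^ j / j !) := by ring
  exact hasDerivAt_tsum_of_isPreconnected
    ((summable_add_one_mul_pow_div_factorial R).mul_left C) Metric.isOpen_ball
    (convex_ball 0 R).isPreconnected (fun j y _ => hderiv j y) hbound hx
    (summable_mul_pow_succ hb x) hx

end FactoriallyBoundedCoefficients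

/-- `(e^x - 1)/x`, the slope of `exp` between `0` and `x`, continued by `1` at `x = 0`. -/
noncomputable def expSlope (x : ℝ) : ℝ := ∑' j : ℕ, x ^ j / (j + 1)!

lemma summable_expSlope (x : ℝ) : Summable fun j : ℕ => x ^ j / (j + 1)! :=
  .of_norm_bounded (summable_pow_div_factorial |x|) fun j => by
    rw [norm_div, norm_pow, Real.norm_natCast, Real.norm_eq_abs]
    gcongr
    exact Nat.le_succ j

lemma expSlope_eq_one_add (x : ℝ) :
    expSlope x = 1 + ∑' j : ℕ, 1 / ((j + 2)! : ℝ) * x ^ (j + 1) := by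
  rw [expSlope, (summable_expSlope x).tsum_eq_zero_add]
  simp only [pow_zero, zero_add, Nat.factorial_one, Nat.cast_one, div_one]
  congr 1
  exact tsum_congr fun j => by ring

lemma continuous_expSlope : Continuous expSlope := by
  have hb (j : ℕ) : |1 / ((j + 2)! : ℝ)| ≤ 1 / j ! := by
    rw [abs_of_pos (by positivity)]
    gcongr
    omega
  rw [funext expSlope_eq_one_add]
  exact continuous_const.add <| continuous_iff_continuousAt.mpr fun x =>
    (hasDerivAt_tsum_mul_pow_succ hb x).continuousAt

lemma mul_expSlope (x : ℝ) : x * expSlope x = exp x - 1 := by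
  have h := (hasSum_nat_add_iff' 1).mpr (NormedSpace.expSeries_div_hasSum_exp x)
  rw [← exp_eq_exp_ℝ] at h
  simp only [Finset.sum_range_one, pow_zero, Nat.factorial_zero, Nat.cast_one, div_one] at h
  rw [expSlope, ← tsum_mul_left, ← h.tsum_eq]
  exact tsum_congr fun j => by rw [pow_succ']; ring

lemma expSlope_zero : expSlope 0 = 1 := by
  simpa using expSlope_eq_one_add 0

lemma expSlope_of_ne_zero {x : ℝ} (hx : x ≠ 0) : expSlope x = (exp x - 1) / x := by
  rw [← mul_expSlope, mul_div_cancel_left₀ _ hx]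

lemma exp_neg_mul_expSlope (x : ℝ) : exp (-x) * expSlope x = expSlope (-x) := by
  rcases eq_or_ne x 0 with rfl | hx
  · simp [expSlope_zero]
  · rw [expSlope_of_ne_zero hx, expSlope_of_ne_zero (neg_ne_zero.mpr hx), exp_neg]
    field_simp
    ring

lemma ite_eq_expSlope_neg (u : ℝ) :
    (if u = 0 then 1 else (1 - exp (-u)) / u) = expSlope (-u) := by
  split_ifs with hu
  · rw [hu, neg_zero, expSlope_zero]
  · rw [expSlope_of_ne_zero (neg_ne_zero.mpr hu), div_neg, ← neg_div, neg_sub]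

lemma harmonic_le_self (n : ℕ) : harmonic n ≤ n := by
  induction n with
  | zero => simp
  | succ n ih =>
    rw [harmonic_succ, Nat.cast_succ]
    gcongr
    exact inv_le_one_of_one_le₀ (by exact_mod_cast Nat.succ_pos n)

/-- The power series of the entire exponential integral `Ein x = ∫ u in 0..x, (1 - e^{-u})/u`. -/
noncomputable def Ein (x : ℝ) : ℝ :=
  ∑' j : ℕ, (-1) ^ j / ((j + 1)! * (j + 1) : ℝ) * x ^ (j + 1)

lemma hasDerivAt_Ein (x : ℝ) : HasDerivAt Ein (expSlope (-x)) x := by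
  have hb (j : ℕ) : |(-1) ^ j / ((j + 1)! * (j + 1) : ℝ)| ≤ 1 / j ! := by
    rw [abs_div, abs_pow, abs_neg, abs_one, one_pow, abs_of_pos (by positivity)]
    gcongr
    calc (j ! : ℝ) ≤ (j + 1)! := by exact_mod_cast Nat.factorial_le (Nat.le_succ j)
      _ ≤ (j + 1)! * (j + 1) :=
        le_mul_of_one_le_right (by positivity) (le_add_of_nonneg_left (Nat.cast_nonneg j))
  refine (hasDerivAt_tsum_mul_pow_succ hb x).congr_deriv (tsum_congr fun j => ?_)
  rw [neg_pow x]
  field_simp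

noncomputable def harmonicEGF (x : ℝ) : ℝ :=
  ∑' j : ℕ, (harmonic (j + 1) : ℝ) / (j + 1)! * x ^ (j + 1)

lemma abs_harmonic_succ_div_factorial_le (j : ℕ) :
    |(harmonic (j + 1) : ℝ) / (j + 1)!| ≤ 1 / j ! := by
  have hH : (harmonic (j + 1) : ℝ) ≤ j + 1 := by exact_mod_cast harmonic_le_self (j + 1)
  have hH₀ : (0 : ℝ) ≤ harmonic (j + 1) := by exact_mod_cast (harmonic_pos j.succ_ne_zero).le
  rw [abs_of_nonneg (by positivity), Nat.factorial_succ, Nat.cast_mul,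
    div_le_div_iff₀ (by positivity) (by positivity)]
  push_cast
  nlinarith [(Nat.factorial_pos j : 0 < j !)]

lemma summable_harmonic_div_factorial_mul_pow (x : ℝ) :
    Summable fun j : ℕ => (harmonic j : ℝ) / j ! * x ^ j :=
  (summable_nat_add_iff 1).mp (summable_mul_pow_succ abs_harmonic_succ_div_factorial_le x)

lemma harmonicEGF_eq_tsum (x : ℝ) :
    harmonicEGF x = ∑' j : ℕ, (harmonic j : ℝ) / j ! * x ^ j := by
  rw [(summable_harmonic_div_factorial_mul_pow x).tsum_eq_zero_add, harmonic_zero]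
  simp [harmonicEGF]

lemma hasDerivAt_harmonicEGF (x : ℝ) :
    HasDerivAt harmonicEGF (harmonicEGF x + expSlope x) x := by
  refine (hasDerivAt_tsum_mul_pow_succ abs_harmonic_succ_div_factorial_le x).congr_deriv ?_
  rw [harmonicEGF_eq_tsum, expSlope, ← (summable_harmonic_div_factorial_mul_pow x).tsum_add
    (summable_expSlope x)]
  refine tsum_congr fun j => ?_
  rw [harmonic_succ, Nat.factorial_succ]
  push_cast
  field_simp

lemma hasDerivAt_exp_neg_mul_harmonicEGF (x : ℝ) :
    HasDerivAt (fun y => exp (-y) * harmonicEGF y) (expSlope (-x)) x := by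
  refine ((hasDerivAt_neg x).exp.mul (hasDerivAt_harmonicEGF x)).congr_deriv ?_
  rw [← exp_neg_mul_expSlope]
  ring

lemma integral_expSlope_neg_eq_Ein (x : ℝ) : ∫ u in (0 : ℝ)..x, expSlope (-u) = Ein x := by
  rw [intervalIntegral.integral_eq_sub_of_hasDerivAt (fun u _ => hasDerivAt_Ein u)
    ((continuous_expSlope.comp continuous_neg).intervalIntegrable 0 x)]
  simp [Ein]

lemma integral_expSlope_neg_eq_exp_neg_mul_harmonicEGF (x : ℝ) :
    ∫ u in (0 : ℝ)..x, expSlope (-u) = exp (-x) * harmonicEGF x := by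
  rw [intervalIntegral.integral_eq_sub_of_hasDerivAt
    (fun u _ => hasDerivAt_exp_neg_mul_harmonicEGF u)
    ((continuous_expSlope.comp continuous_neg).intervalIntegrable 0 x)]
  simp [harmonicEGF]

lemma Ein_eq_exp_neg_mul_harmonicEGF (x : ℝ) : Ein x = exp (-x) * harmonicEGF x := by
  rw [← integral_expSlope_neg_eq_Ein, integral_expSlope_neg_eq_exp_neg_mul_harmonicEGF]

theorem harmonic_series_transformation (x : ℝ) :
    (∑' j : ℕ, x ^ (j + 1) * (-1 : ℝ) ^ j / ((Nat.factorial (j + 1)) * (j + 1)) =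
      Real.exp (-x) *
        ∑' j : ℕ, (∑ m ∈ Finset.Icc 1 (j + 1), (1 : ℝ) / m) * x ^ (j + 1) /
          (Nat.factorial (j + 1))) ∧
    (∫ u in (0:ℝ)..x, (if u = 0 then 1 else (1 - Real.exp (-u)) / u)) =
      Real.exp (-x) *
        ∑' j : ℕ, (∑ m ∈ Finset.Icc 1 (j + 1), (1 : ℝ) / m) * x ^ (j + 1) /
          (Nat.factorial (j + 1)) := by
  have hEin : ∑' j : ℕ, x ^ (j + 1) * (-1 : ℝ) ^ j / ((Nat.factorial (j + 1)) * (j + 1)) =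
      Ein x :=
    tsum_congr fun j => by ring
  have hG : ∑' j : ℕ, (∑ m ∈ Finset.Icc 1 (j + 1), (1 : ℝ) / m) * x ^ (j + 1) /
      (Nat.factorial (j + 1)) = harmonicEGF x :=
    tsum_congr fun j => by simp only [harmonic_eq_sum_Icc, one_div]; push_cast; ring
  simp only [hEin, hG, ite_eq_expSlope_neg]
  exact ⟨Ein_eq_exp_neg_mul_harmonicEGF x, integral_expSlope_neg_eq_exp_neg_mul_harmonicEGF x⟩
end

section
/- Let a₀ = 1, b₀ = cos φ with 0 < φ < π/2, and let (a_j), (b_j) be the AGM iteration a_{j+1} = (a_j+b_j)/2, b_{j+1} = √(a_j b_j), with common limit a = lim a_j = lim b_j. Then 2a·K(φ) = π, where K(φ) = ∫_0^{π/2} (1 − sin²φ·sin²θ)^{-1/2} dθ. -/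
/-!
Gauss's integral `I(x, y) = ∫₀^{π/2} (x² cos² θ + y² sin² θ)^(-1/2) dθ` gives `K(φ) = I(1, cos φ)`.
The substitution `t = y tan θ` turns it into `∫₀^∞ ((t² + x²)(t² + y²))^(-1/2) dt`, and Gauss's
substitution `u = (t - xy/t)/2`, a bijection of `(0, ∞)` onto `ℝ`, shows (the new integrand being
even in `u`) that this integral is unchanged by the AGM step `(x, y) ↦ ((x + y)/2, √(xy))`.
Hence `I(a_j, b_j) = K(φ)` for every `j`. As the integrand of `I(a_j, b_j)` lies between `1/a_j`
and `1/b_j`, we get `π ≤ 2 a_j K(φ)` and `2 b_j K(φ) ≤ π`, and `j → ∞` gives `2 L K(φ) = π`.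
-/

open Real Set MeasureTheory Filter

noncomputable def gaussIntegrand (x y θ : ℝ) : ℝ := (√(x ^ 2 * cos θ ^ 2 + y ^ 2 * sin θ ^ 2))⁻¹

noncomputable def gaussIntegral (x y : ℝ) : ℝ := ∫ θ in (0)..(π / 2), gaussIntegrand x y θ

noncomputable def gaussAlgIntegrand (x y t : ℝ) : ℝ := (√((t ^ 2 + x ^ 2) * (t ^ 2 + y ^ 2)))⁻¹

variable {x y : ℝ}

lemma gaussIntegrand_mem_Icc (hy : 0 < y) (hyx : y ≤ x) (θ : ℝ) :
    gaussIntegrand x y θ ∈ Icc x⁻¹ y⁻¹ := by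
  have hpyth := sin_sq_add_cos_sq θ
  have hP : y ^ 2 ≤ x ^ 2 * cos θ ^ 2 + y ^ 2 * sin θ ^ 2 := by
    nlinarith [mul_le_mul_of_nonneg_right (pow_le_pow_left₀ hy.le hyx 2) (sq_nonneg (cos θ))]
  have hP' : x ^ 2 * cos θ ^ 2 + y ^ 2 * sin θ ^ 2 ≤ x ^ 2 := by
    nlinarith [mul_le_mul_of_nonneg_right (pow_le_pow_left₀ hy.le hyx 2) (sq_nonneg (sin θ))]
  have hlow : y ≤ √(x ^ 2 * cos θ ^ 2 + y ^ 2 * sin θ ^ 2) := le_sqrt_of_sq_le hP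
  have hhigh : √(x ^ 2 * cos θ ^ 2 + y ^ 2 * sin θ ^ 2) ≤ x :=
    sqrt_le_iff.2 ⟨hy.le.trans hyx, hP'⟩
  exact ⟨inv_anti₀ (hy.trans_le hlow) hhigh, inv_anti₀ hy hlow⟩

lemma continuous_gaussIntegrand (hx : x ≠ 0) (hy : y ≠ 0) : Continuous (gaussIntegrand x y) := by
  refine Continuous.inv₀ (by fun_prop) fun θ => (sqrt_pos.2 ?_).ne'
  have hm : 0 < min (x ^ 2) (y ^ 2) := lt_min (by positivity) (by positivity)
  nlinarith [sin_sq_add_cos_sq θ,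
    mul_le_mul_of_nonneg_right (min_le_left (x ^ 2) (y ^ 2)) (sq_nonneg (cos θ)),
    mul_le_mul_of_nonneg_right (min_le_right (x ^ 2) (y ^ 2)) (sq_nonneg (sin θ))]

lemma gaussIntegral_bounds (hy : 0 < y) (hyx : y ≤ x) :
    π ≤ 2 * x * gaussIntegral x y ∧ 2 * y * gaussIntegral x y ≤ π := by
  have hx : 0 < x := hy.trans_le hyx
  have hint : IntervalIntegrable (gaussIntegrand x y) volume 0 (π / 2) :=
    (continuous_gaussIntegrand hx.ne' hy.ne').intervalIntegrable _ _
  have hπ : (0 : ℝ) ≤ π / 2 := by positivity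
  have hlow : ∫ _ in (0)..(π / 2), x⁻¹ ≤ gaussIntegral x y :=
    intervalIntegral.integral_mono_on hπ intervalIntegrable_const hint
      fun θ _ => (gaussIntegrand_mem_Icc hy hyx θ).1
  have hhigh : gaussIntegral x y ≤ ∫ _ in (0)..(π / 2), y⁻¹ :=
    intervalIntegral.integral_mono_on hπ hint intervalIntegrable_const
      fun θ _ => (gaussIntegrand_mem_Icc hy hyx θ).2
  simp only [intervalIntegral.integral_const, sub_zero, smul_eq_mul] at hlow hhigh
  constructor
  · calc π = 2 * x * (π / 2 * x⁻¹) := by field_simp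
      _ ≤ 2 * x * gaussIntegral x y := by gcongr
  · calc 2 * y * gaussIntegral x y ≤ 2 * y * (π / 2 * y⁻¹) := by gcongr
      _ = π := by field_simp

lemma mul_tan_image_Ioo (hy : 0 < y) : (fun θ => y * tan θ) '' Ioo 0 (π / 2) = Ioi 0 := by
  ext u
  constructor
  · rintro ⟨θ, ⟨h0, hπ⟩, rfl⟩
    exact mul_pos hy (tan_pos_of_pos_of_lt_pi_div_two h0 hπ)
  · intro (hu : 0 < u)
    refine ⟨arctan (u / y), ⟨?_, arctan_lt_pi_div_two _⟩, ?_⟩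
    · simpa using arctan_strictMono (div_pos hu hy)
    · simp only [tan_arctan]
      field_simp

lemma mul_tan_injOn (hy : y ≠ 0) : InjOn (fun θ => y * tan θ) (Ioo 0 (π / 2)) :=
  fun θ₁ h₁ θ₂ h₂ h => injOn_tan (Ioo_subset_Ioo (by linarith [pi_pos]) le_rfl h₁)
      (Ioo_subset_Ioo (by linarith [pi_pos]) le_rfl h₂) (mul_left_cancel₀ hy h)

lemma hasDerivAt_mul_tan (y : ℝ) {θ : ℝ} (hθ : cos θ ≠ 0) :
    HasDerivAt (fun θ => y * tan θ) (y / cos θ ^ 2) θ := by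
  simpa [div_eq_mul_inv] using (hasDerivAt_tan hθ).const_mul y

lemma abs_deriv_mul_gaussAlgIntegrand_mul_tan (hy : 0 < y) {θ : ℝ} (hθ : 0 < cos θ) :
    |y / cos θ ^ 2| * gaussAlgIntegrand x y (y * tan θ) = gaussIntegrand x y θ := by
  have hP : 0 ≤ x ^ 2 * cos θ ^ 2 + y ^ 2 * sin θ ^ 2 := by positivity
  have hprod : ((y * tan θ) ^ 2 + x ^ 2) * ((y * tan θ) ^ 2 + y ^ 2) =
      (x ^ 2 * cos θ ^ 2 + y ^ 2 * sin θ ^ 2) * (y / cos θ ^ 2) ^ 2 := by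
    rw [tan_eq_sin_div_cos]
    field_simp
    nlinarith [sin_sq_add_cos_sq θ]
  rw [gaussAlgIntegrand, gaussIntegrand, hprod, sqrt_mul hP, sqrt_sq (by positivity),
    abs_of_pos (by positivity), mul_inv, mul_left_comm, mul_inv_cancel₀ (by positivity), mul_one]

lemma integral_gaussAlgIntegrand_Ioi (x : ℝ) (hy : 0 < y) :
    ∫ t in Ioi 0, gaussAlgIntegrand x y t = gaussIntegral x y := by
  have hcos : ∀ θ ∈ Ioo (0 : ℝ) (π / 2), 0 < cos θ := fun θ hθ =>
    cos_pos_of_mem_Ioo ⟨by linarith [hθ.1, pi_pos], hθ.2⟩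
  rw [gaussIntegral, intervalIntegral.integral_of_le (by positivity), integral_Ioc_eq_integral_Ioo,
    ← mul_tan_image_Ioo hy, integral_image_eq_integral_abs_deriv_smul measurableSet_Ioo
      (fun θ hθ => (hasDerivAt_mul_tan y (hcos θ hθ).ne').hasDerivWithinAt) (mul_tan_injOn hy.ne')]
  exact setIntegral_congr_fun measurableSet_Ioo fun θ hθ =>
    abs_deriv_mul_gaussAlgIntegrand_mul_tan hy (hcos θ hθ)

lemma half_sub_div_strictMonoOn {c : ℝ} (hc : 0 ≤ c) :
    StrictMonoOn (fun t => (t - c / t) / 2) (Ioi 0) :=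
  fun t₁ (h₁ : 0 < t₁) t₂ _ h => by
    have : c / t₂ ≤ c / t₁ := div_le_div_of_nonneg_left hc h₁ h.le
    dsimp only
    linarith

lemma half_sub_div_image_Ioi {c : ℝ} (hc : 0 < c) :
    (fun t => (t - c / t) / 2) '' Ioi 0 = univ := by
  refine eq_univ_of_forall fun u => ?_
  have hs : √(u ^ 2 + c) ^ 2 = u ^ 2 + c := sq_sqrt (by positivity)
  have hpos : 0 < u + √(u ^ 2 + c) := by
    have : |u| < √(u ^ 2 + c) := by
      rw [← sqrt_sq_eq_abs]
      exact sqrt_lt_sqrt (sq_nonneg u) (by linarith)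
    linarith [neg_abs_le u]
  refine ⟨u + √(u ^ 2 + c), hpos, ?_⟩
  field_simp
  linear_combination hs

lemma hasDerivAt_half_sub_div (c : ℝ) {t : ℝ} (ht : t ≠ 0) :
    HasDerivAt (fun t => (t - c / t) / 2) ((1 + c / t ^ 2) / 2) t := by
  refine (((hasDerivAt_id' t).sub ((hasDerivAt_const t c).div (hasDerivAt_id' t) ht)).div_const
    2).congr_deriv ?_
  field_simp
  ring

lemma integral_gaussAlgIntegrand_eq_two_mul_integral_Ioi (x y : ℝ) :
    ∫ t, gaussAlgIntegrand x y t = 2 * ∫ t in Ioi 0, gaussAlgIntegrand x y t := by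
  simp only [← integral_comp_abs, gaussAlgIntegrand, sq_abs]

lemma abs_deriv_mul_gaussAlgIntegrand_agm (hx : 0 < x) (hy : 0 < y) {t : ℝ} (ht : 0 < t) :
    |(1 + x * y / t ^ 2) / 2| * gaussAlgIntegrand ((x + y) / 2) √(x * y) ((t - x * y / t) / 2) =
      2 * gaussAlgIntegrand x y t := by
  have hP : 0 ≤ (t ^ 2 + x ^ 2) * (t ^ 2 + y ^ 2) := by positivity
  have hprod : (((t - x * y / t) / 2) ^ 2 + ((x + y) / 2) ^ 2) *
      (((t - x * y / t) / 2) ^ 2 + √(x * y) ^ 2) =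
      (t ^ 2 + x ^ 2) * (t ^ 2 + y ^ 2) * ((t ^ 2 + x * y) / (4 * t ^ 2)) ^ 2 := by
    rw [sq_sqrt (by positivity)]
    field_simp
    ring
  rw [gaussAlgIntegrand, gaussAlgIntegrand, hprod, sqrt_mul hP, sqrt_sq (by positivity),
    abs_of_pos (by positivity)]
  field_simp
  ring

lemma integral_gaussAlgIntegrand_agm (hx : 0 < x) (hy : 0 < y) :
    ∫ t in Ioi 0, gaussAlgIntegrand ((x + y) / 2) √(x * y) t =
      ∫ t in Ioi 0, gaussAlgIntegrand x y t := by
  have hxy : 0 < x * y := mul_pos hx hy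
  have key := integral_image_eq_integral_abs_deriv_smul measurableSet_Ioi
    (fun t (ht : 0 < t) => (hasDerivAt_half_sub_div (x * y) ht.ne').hasDerivWithinAt)
    (half_sub_div_strictMonoOn hxy.le).injOn (gaussAlgIntegrand ((x + y) / 2) √(x * y))
  simp only [smul_eq_mul] at key
  rw [half_sub_div_image_Ioi hxy, setIntegral_univ,
    integral_gaussAlgIntegrand_eq_two_mul_integral_Ioi,
    setIntegral_congr_fun measurableSet_Ioi fun t (ht : 0 < t) =>
      abs_deriv_mul_gaussAlgIntegrand_agm hx hy ht, integral_const_mul] at key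
  linarith

lemma gaussIntegral_agm (hx : 0 < x) (hy : 0 < y) :
    gaussIntegral ((x + y) / 2) √(x * y) = gaussIntegral x y := by
  rw [← integral_gaussAlgIntegrand_Ioi _ (sqrt_pos.2 (mul_pos hx hy)),
    ← integral_gaussAlgIntegrand_Ioi _ hy, integral_gaussAlgIntegrand_agm hx hy]

section AGMSequence

variable {a b : ℕ → ℝ}

lemma agm_seq_pos_le (ha : ∀ j, a (j + 1) = (a j + b j) / 2) (hb : ∀ j, b (j + 1) = √(a j * b j))
    (hb0 : 0 < b 0) (hba0 : b 0 ≤ a 0) (j : ℕ) : 0 < b j ∧ b j ≤ a j := by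
  induction j with
  | zero => exact ⟨hb0, hba0⟩
  | succ j ih =>
    obtain ⟨hbj, hba⟩ := ih
    rw [ha, hb]
    refine ⟨sqrt_pos.2 (by nlinarith), sqrt_le_iff.2 ⟨by linarith, ?_⟩⟩
    nlinarith [sq_nonneg (a j - b j)]

lemma gaussIntegral_agm_seq (ha : ∀ j, a (j + 1) = (a j + b j) / 2)
    (hb : ∀ j, b (j + 1) = √(a j * b j)) (hb0 : 0 < b 0) (hba0 : b 0 ≤ a 0) (j : ℕ) :
    gaussIntegral (a j) (b j) = gaussIntegral (a 0) (b 0) := by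
  induction j with
  | zero => rfl
  | succ j ih =>
    obtain ⟨hbj, hba⟩ := agm_seq_pos_le ha hb hb0 hba0 j
    rw [ha, hb, gaussIntegral_agm (hbj.trans_le hba) hbj, ih]

end AGMSequence

lemma one_sub_sin_sq_mul_sin_sq_rpow (φ θ : ℝ) :
    (1 - sin φ ^ 2 * sin θ ^ 2) ^ (-(1 / 2 : ℝ)) = gaussIntegrand 1 (cos φ) θ := by
  have hmod : 1 - sin φ ^ 2 * sin θ ^ 2 = 1 ^ 2 * cos θ ^ 2 + cos φ ^ 2 * sin θ ^ 2 := by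
    linear_combination -(sin θ ^ 2) * sin_sq_add_cos_sq φ - sin_sq_add_cos_sq θ
  rw [hmod, rpow_neg (by positivity), ← sqrt_eq_rpow, gaussIntegrand]

open Filter in
theorem agm_elliptic_integral (φ : ℝ) (hφ : 0 < φ) (hφ' : φ < Real.pi / 2)
    (a b : ℕ → ℝ) (ha0 : a 0 = 1) (hb0 : b 0 = Real.cos φ)
    (ha : ∀ j, a (j + 1) = (a j + b j) / 2)
    (hb : ∀ j, b (j + 1) = Real.sqrt (a j * b j))
    (L : ℝ) (hLa : Tendsto a atTop (nhds L)) (hLb : Tendsto b atTop (nhds L)) :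
    2 * L * ∫ θ in (0:ℝ)..(Real.pi / 2),
        (1 - Real.sin φ ^ 2 * Real.sin θ ^ 2) ^ (-(1/2 : ℝ)) = Real.pi := by
  have hcos : 0 < cos φ := cos_pos_of_mem_Ioo ⟨by linarith [pi_pos], hφ'⟩
  have hb0pos : 0 < b 0 := hb0 ▸ hcos
  have hba0 : b 0 ≤ a 0 := ha0 ▸ hb0 ▸ cos_le_one φ
  have hK : ∫ θ in (0:ℝ)..(π / 2), (1 - sin φ ^ 2 * sin θ ^ 2) ^ (-(1 / 2 : ℝ)) =
      gaussIntegral (a 0) (b 0) := by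
    rw [ha0, hb0, gaussIntegral]
    exact intervalIntegral.integral_congr fun θ _ => one_sub_sin_sq_mul_sin_sq_rpow φ θ
  have hbounds (j : ℕ) : π ≤ 2 * a j * gaussIntegral (a 0) (b 0) ∧
      2 * b j * gaussIntegral (a 0) (b 0) ≤ π := by
    obtain ⟨hbj, hba⟩ := agm_seq_pos_le ha hb hb0pos hba0 j
    rw [← gaussIntegral_agm_seq ha hb hb0pos hba0 j]
    exact gaussIntegral_bounds hbj hba
  rw [hK]
  exact le_antisymm (le_of_tendsto' ((hLb.const_mul 2).mul_const _) fun j => (hbounds j).2)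
    (ge_of_tendsto' ((hLa.const_mul 2).mul_const _) fun j => (hbounds j).1)
end
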